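/- Let $n \ge 1$ and let $\mathcal{P}_{2n,a}$ denote the set of permutations $\pi$ of $\{1,\dots,2n\}$ such that $\pi$ maps $\{1,\dots,n\}$ into $\{n+1,\dots,2n\}$ and maps $\{n+1,\dots,2n\}$ into $\{1,\dots,n\}$. For a permutation $\pi$ let $c(\pi)$ denote the number of cycles of $\pi$. Then for every real number $\alpha$, $\sum_{\pi\in\mathcal{P}_{2n,a}} \alpha^{c(\pi)} = n!\,\alpha(\alpha+1)\cdots(\alpha+n-1)$. -/

import Mathlib

/-!
A permutation of `α ⊕ β` exchanging the two summands is `bipartite σ τ` for a unique pair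
`σ : α ≃ β`, `τ : β ≃ α`, and its cycles alternate between the summands, so they correspond to
the cycles of `τ ∘ σ` on `α`. The sum therefore equals `|α ≃ β|` times `∑_{ρ ∈ S_n} x ^ c(ρ)`,
which is the rising factorial `x (x + 1) ⋯ (x + n - 1)`: a new point is inserted into a
permutation of `n` points either as a new fixed point (one more cycle) or in front of one of
the `n` old points (same number of cycles).

Cycle counts are compared through invariant functions: the maps `f : α → Bool` with `f ∘ π = f`
are those constant on the cycles of `π`, so there are `2 ^ c(π)` of them, and an explicit
bijection between such maps for two permutations shows that they have the same number of cycles.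
-/

open Finset

namespace Equiv.Perm

variable {α β γ : Type*} {R : Type*} [CommSemiring R] (x : R)

/-- Unlike `π.cycleType.card`, this counts the fixed points of `π` as cycles. -/
noncomputable def cycleCount (π : Perm α) : ℕ :=
  Nat.card (Quotient (SameCycle.setoid π))

theorem SameCycle.apply_eq_of_comp_eq [Finite α] {π : Perm α} {f : α → γ} (hf : f ∘ π = f)
    {a b : α} (h : SameCycle π a b) : f b = f a := by
  obtain ⟨i, rfl⟩ := h.exists_nat_pow_eq
  rw [coe_pow]
  exact congrFun (Function.iterate_invariant hf i) a

def invariantFunEquiv [Finite α] (π : Perm α) :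
    {f : α → γ // f ∘ π = f} ≃ (Quotient (SameCycle.setoid π) → γ) where
  toFun f := Quotient.lift f.1 fun _ _ h => (SameCycle.apply_eq_of_comp_eq f.2 h).symm
  invFun g := ⟨g ∘ Quotient.mk _, funext fun a =>
    congrArg g (Quotient.sound (sameCycle_apply_left.2 (SameCycle.refl π a)))⟩
  left_inv _ := rfl
  right_inv _ := funext fun q => Quotient.inductionOn q fun _ => rfl

theorem card_invariantFun [Finite α] (π : Perm α) :
    Nat.card {f : α → γ // f ∘ π = f} = Nat.card γ ^ π.cycleCount := by
  rw [Nat.card_congr (invariantFunEquiv π), Nat.card_fun, cycleCount]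

theorem cycleCount_eq_card_cycleType [Fintype α] [DecidableEq α] {π : Perm α}
    (h : ∀ x, π x ≠ x) : π.cycleCount = π.cycleType.card := by
  have hsupp : ∀ x, x ∈ π.support := fun x => mem_support.2 (h x)
  rw [cycleType_def, Multiset.card_map, ← Finset.card_def, ← Nat.card_eq_finsetCard, cycleCount]
  refine Nat.card_eq_of_bijective
    (Quotient.lift (fun x => ⟨π.cycleOf x, cycleOf_mem_cycleFactorsFinset_iff.2 (hsupp x)⟩)
      fun x y hxy => Subtype.ext hxy.cycleOf_eq) ⟨?_, ?_⟩
  · rintro ⟨x⟩ ⟨y⟩ hxy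
    exact Quotient.sound ((sameCycle_iff_cycleOf_eq_of_mem_support (hsupp x) (hsupp y)).2
      (congrArg Subtype.val hxy))
  · rintro ⟨c, hc⟩
    obtain ⟨x, hx⟩ := (mem_cycleFactorsFinset_iff.1 hc).1.nonempty_support
    exact ⟨⟦x⟧, Subtype.ext (cycle_is_cycleOf hx hc).symm⟩

theorem card_invariantFun_bool [Finite α] (π : Perm α) :
    Nat.card {f : α → Bool // f ∘ π = f} = 2 ^ π.cycleCount := by
  rw [card_invariantFun, Nat.card_eq_fintype_card, Fintype.card_bool]

theorem cycleCount_eq_of_card_invariantFun [Finite α] {π : Perm α} {k : ℕ}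
    (h : Nat.card {f : α → Bool // f ∘ π = f} = 2 ^ k) : π.cycleCount = k :=
  Nat.pow_right_injective le_rfl (by rwa [card_invariantFun_bool] at h)

theorem cycleCount_permCongr [Finite α] (e : α ≃ β) (π : Perm α) :
    (e.permCongr π).cycleCount = π.cycleCount := by
  have : Finite β := .of_equiv α e
  refine cycleCount_eq_of_card_invariantFun ?_
  rw [← card_invariantFun_bool]
  refine Nat.card_congr
    { toFun := fun f => ⟨f.1 ∘ e, ?_⟩
      invFun := fun g => ⟨g.1 ∘ e.symm, ?_⟩
      left_inv := fun f => by ext; simp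
      right_inv := fun g => by ext; simp }
  · funext x; simpa [permCongr_apply] using congrFun f.2 (e x)
  · funext y; simpa [permCongr_apply] using congrFun g.2 (e.symm y)

section Option

variable [DecidableEq α] (σ : Perm α)

theorem comp_decomposeOption_symm_none_eq_iff {f : Option α → γ} :
    f ∘ decomposeOption.symm (none, σ) = f ↔ (f ∘ some) ∘ σ = f ∘ some := by
  simp [funext_iff, Option.forall]

theorem comp_decomposeOption_symm_some_eq_iff (a : α) {f : Option α → γ} :
    f ∘ decomposeOption.symm (some a, σ) = f ↔
      f (some a) = f none ∧ (f ∘ some) ∘ σ = f ∘ some := by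
  simp only [funext_iff, Option.forall, Function.comp_apply, decomposeOption_symm_apply, mul_apply,
    optionCongr_apply, Option.map_none, Option.map_some, swap_apply_left]
  refine and_congr_right fun hnone => forall_congr' fun x => ?_
  by_cases hx : σ x = a
  · simp [hx, hnone]
  · rw [swap_apply_of_ne_of_ne (by simp) (by simpa)]

theorem cycleCount_decomposeOption_symm_none [Finite α] :
    (decomposeOption.symm (none, σ)).cycleCount = σ.cycleCount + 1 := by
  refine cycleCount_eq_of_card_invariantFun ((Nat.card_congr (β := {g // g ∘ σ = g} × Bool)
    { toFun := fun f => (⟨f.1 ∘ some, (comp_decomposeOption_symm_none_eq_iff σ).1 f.2⟩, f.1 none)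
      invFun := fun p => ⟨fun o => o.elim p.2 p.1.1,
        (comp_decomposeOption_symm_none_eq_iff σ).2 p.1.2⟩
      left_inv := fun f => by ext o; cases o <;> rfl
      right_inv := fun _ => rfl }).trans ?_)
  simp [Nat.card_prod, card_invariantFun_bool, pow_succ]

theorem cycleCount_decomposeOption_symm_some [Finite α] (a : α) :
    (decomposeOption.symm (some a, σ)).cycleCount = σ.cycleCount := by
  refine cycleCount_eq_of_card_invariantFun ((Nat.card_congr
    { toFun := fun f => ⟨f.1 ∘ some, ((comp_decomposeOption_symm_some_eq_iff σ a).1 f.2).2⟩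
      invFun := fun g => ⟨fun o => o.elim (g.1 a) g.1,
        (comp_decomposeOption_symm_some_eq_iff σ a).2 ⟨rfl, g.2⟩⟩
      left_inv := fun f => by
        ext o; cases o
        · exact ((comp_decomposeOption_symm_some_eq_iff σ a).1 f.2).1
        · rfl
      right_inv := fun _ => rfl }).trans (card_invariantFun_bool σ))

end Option

theorem sum_pow_cycleCount_option [Fintype α] [DecidableEq α] :
    ∑ π : Perm (Option α), x ^ π.cycleCount =
      (x + Fintype.card α) * ∑ σ : Perm α, x ^ σ.cycleCount := by
  rw [← decomposeOption.symm.sum_comp, Fintype.sum_prod_type, Fintype.sum_option]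
  simp only [cycleCount_decomposeOption_symm_none, cycleCount_decomposeOption_symm_some,
    Finset.sum_const, Finset.card_univ, nsmul_eq_mul, pow_succ, ← Finset.sum_mul]
  ring

theorem sum_pow_cycleCount_fin (n : ℕ) :
    ∑ π : Perm (Fin n), x ^ π.cycleCount = ∏ i ∈ range n, (x + i) := by
  induction n with
  | zero => simp [cycleCount]
  | succ n ih =>
    rw [← ((finSuccEquiv n).symm.permCongr).sum_comp]
    simp only [cycleCount_permCongr]
    rw [sum_pow_cycleCount_option, ih, prod_range_succ, Fintype.card_fin, mul_comm]

theorem sum_pow_cycleCount [Fintype α] [DecidableEq α] :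
    ∑ π : Perm α, x ^ π.cycleCount = ∏ i ∈ range (Fintype.card α), (x + i) := by
  rw [← sum_pow_cycleCount_fin, ← ((Fintype.equivFin α).symm.permCongr).sum_comp]
  simp only [cycleCount_permCongr]

def bipartite (σ : α ≃ β) (τ : β ≃ α) : Perm (α ⊕ β) :=
  (sumComm α β).trans (Equiv.sumCongr τ σ)

@[simp] theorem bipartite_inl (σ : α ≃ β) (τ : β ≃ α) (a : α) :
    bipartite σ τ (.inl a) = .inr (σ a) := rfl

@[simp] theorem bipartite_inr (σ : α ≃ β) (τ : β ≃ α) (b : β) :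
    bipartite σ τ (.inr b) = .inl (τ b) := rfl

theorem comp_bipartite_eq_iff (σ : α ≃ β) (τ : β ≃ α) {f : α ⊕ β → γ} :
    f ∘ bipartite σ τ = f ↔
      (f ∘ .inl) ∘ (σ.trans τ) = f ∘ .inl ∧ f ∘ .inr = (f ∘ .inl) ∘ σ.symm := by
  simp only [funext_iff, Sum.forall, Function.comp_apply, bipartite_inl, bipartite_inr,
    Equiv.trans_apply]
  constructor
  · rintro ⟨hl, hr⟩
    exact ⟨fun a => (hr _).trans (hl a), fun b => by simpa using hl (σ.symm b)⟩
  · rintro ⟨hl, hr⟩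
    exact ⟨fun a => by simp [hr], fun b => by simpa [hr] using hl (σ.symm b)⟩

theorem cycleCount_bipartite [Finite α] [Finite β] (σ : α ≃ β) (τ : β ≃ α) :
    (bipartite σ τ).cycleCount = cycleCount (σ.trans τ) := by
  refine cycleCount_eq_of_card_invariantFun ?_
  rw [← card_invariantFun_bool]
  exact Nat.card_congr
    { toFun := fun f => ⟨f.1 ∘ .inl, ((comp_bipartite_eq_iff σ τ).1 f.2).1⟩
      invFun := fun g => ⟨Sum.elim g.1 (g.1 ∘ σ.symm), (comp_bipartite_eq_iff σ τ).2 ⟨g.2, rfl⟩⟩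
      left_inv := fun f => Subtype.ext <| by
        dsimp only
        rw [← ((comp_bipartite_eq_iff σ τ).1 f.2).2, Sum.elim_comp_inl_inr]
      right_inv := fun _ => rfl }

def bipartiteEquiv :
    (α ≃ β) × (β ≃ α) ≃ {π : Perm (α ⊕ β) // ∀ z, (π z).isLeft = z.isRight} where
  toFun p := ⟨bipartite p.1 p.2, by rintro (a | b) <;> rfl⟩
  invFun π :=
    (sumIsLeft.symm.trans ((π.1.subtypeEquiv fun z => by
        rw [← Sum.not_isLeft, π.2 z, Sum.not_isRight]).trans sumIsRight),
      sumIsRight.symm.trans ((π.1.subtypeEquiv fun z => by rw [π.2 z]).trans sumIsLeft))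
  left_inv p := by ext <;> rfl
  right_inv π := by
    ext (a | b) <;> simp [Sum.inr_getRight, Sum.inl_getLeft]

theorem apply_ne_self_of_isLeft_eq_isRight {π : Perm (α ⊕ β)}
    (h : ∀ z, (π z).isLeft = z.isRight) (z : α ⊕ β) : π z ≠ z := fun hz => by
  have := h z
  rw [hz] at this
  cases z <;> simp at this

theorem sum_pow_cycleCount_bipartite [Fintype α] [Fintype β] [DecidableEq α] [DecidableEq β] :
    ∑ π ∈ univ.filter (fun π : Perm (α ⊕ β) => ∀ z, (π z).isLeft = z.isRight), x ^ π.cycleCount =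
      Fintype.card (α ≃ β) * ∏ i ∈ range (Fintype.card α), (x + i) := by
  rw [sum_subtype _ mem_filter_univ, ← bipartiteEquiv.sum_comp, Fintype.sum_prod_type]
  have hτ : ∀ σ : α ≃ β, ∑ τ : β ≃ α, x ^ (bipartite σ τ).cycleCount =
      ∏ i ∈ range (Fintype.card α), (x + i) := fun σ => by
    simp only [cycleCount_bipartite]
    rw [← sum_pow_cycleCount, ← (σ.equivCongr (Equiv.refl α)).sum_comp]
    congr! with ρ
    ext a
    simp
  simp [bipartiteEquiv, hτ]

end Equiv.Perm

def finSumFinEquivTwoMul (n : ℕ) : Fin n ⊕ Fin n ≃ Fin (2 * n) :=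
  finSumFinEquiv.trans (finCongr (two_mul n).symm)

theorem val_finSumFinEquivTwoMul_lt_iff {n : ℕ} (z : Fin n ⊕ Fin n) :
    (finSumFinEquivTwoMul n z : ℕ) < n ↔ z.isLeft := by
  cases z <;> simp [finSumFinEquivTwoMul]

theorem permCongr_finSumFinEquivTwoMul_swaps_halves_iff {n : ℕ} (π : Equiv.Perm (Fin n ⊕ Fin n)) :
    (∀ i : Fin (2 * n), (i.val < n → n ≤ ((finSumFinEquivTwoMul n).permCongr π i).val) ∧
      (n ≤ i.val → ((finSumFinEquivTwoMul n).permCongr π i).val < n)) ↔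
    ∀ z, (π z).isLeft = z.isRight := by
  rw [← (finSumFinEquivTwoMul n).forall_congr_right]
  refine forall_congr' fun z => ?_
  simp only [Equiv.permCongr_apply, Equiv.symm_apply_apply, ← not_lt,
    val_finSumFinEquivTwoMul_lt_iff]
  rcases z with a | a <;> simp

theorem stmt0_general (n : ℕ) (α : ℝ) :
    ∑ π ∈ Finset.univ.filter (fun π : Equiv.Perm (Fin (2 * n)) =>
        ∀ i : Fin (2 * n), (i.val < n → n ≤ (π i).val) ∧ (n ≤ i.val → (π i).val < n)),
      α ^ π.cycleType.card
    = (n.factorial : ℝ) * ∏ i ∈ Finset.range n, (α + i) := by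
  have hsum := Equiv.Perm.sum_pow_cycleCount_bipartite (α := Fin n) (β := Fin n) α
  rw [Fintype.card_perm, Fintype.card_fin] at hsum
  rw [← hsum]
  refine (Finset.sum_equiv (finSumFinEquivTwoMul n).permCongr (fun π => ?_) fun π hπ => ?_).symm
  · rw [mem_filter_univ, mem_filter_univ, permCongr_finSumFinEquivTwoMul_swaps_halves_iff]
  · have hfree := Equiv.Perm.apply_ne_self_of_isLeft_eq_isRight ((mem_filter_univ _).1 hπ)
    rw [← Equiv.Perm.cycleCount_eq_card_cycleType, Equiv.Perm.cycleCount_permCongr]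
    intro i hi
    exact hfree _ ((Equiv.eq_symm_apply (finSumFinEquivTwoMul n)).2 hi)

theorem stmt0 (n : ℕ) (hn : 1 ≤ n) (α : ℝ) :
    ∑ π ∈ Finset.univ.filter (fun π : Equiv.Perm (Fin (2 * n)) =>
        ∀ i : Fin (2 * n), (i.val < n → n ≤ (π i).val) ∧ (n ≤ i.val → (π i).val < n)),
      α ^ π.cycleType.card
    = (n.factorial : ℝ) * ∏ i ∈ Finset.range n, (α + i) :=
  stmt0_general n α
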